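/- arXiv:1904.08473 — 2 statements merged into one kernel-verified Lean document; each statement's English description precedes it below -/
import Mathlib

section
/- Let M = (S, A, P, r, γ) be a finite MDP with γ ∈ (0,1), p0 an initial state distribution, and μ a behavior policy. Suppose π* is an optimal policy of M (i.e., R_M^{π*} ≥ R_M^π for all policies π) that is covered by μ, i.e., d^μ(s) > 0 whenever d^{π*}(s) > 0 and μ(a|s) > 0 whenever d^{π*}(s) > 0 and π*(a|s) > 0. Then π* is also optimal in the augmented MDP M_μ, and the optimal values coincide: for every policy π, R_{M_μ}^π ≤ R_{M_μ}^{π*} = R_M^{π*}. -/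
open scoped BigOperators
open Finset

noncomputable section

/-- One-step state-distribution update under policy `π` (here `π s a` denotes `π(a|s)`). -/
def nextDist {S A : Type} [Fintype S] [Fintype A]
    (P : S → A → S → ℝ) (π : S → A → ℝ) (d : S → ℝ) : S → ℝ :=
  fun s' => ∑ s, ∑ a, d s * π s a * P s a s'

/-- The time-`t` state distribution `d_t^π`. -/
def stateDist {S A : Type} [Fintype S] [Fintype A]
    (P : S → A → S → ℝ) (π : S → A → ℝ) (p0 : S → ℝ) : ℕ → S → ℝ
  | 0 => p0
  | t + 1 => nextDist P π (stateDist P π p0 t)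

/-- The discounted state distribution `d^π`. -/
def discDist {S A : Type} [Fintype S] [Fintype A]
    (γ : ℝ) (P : S → A → S → ℝ) (π : S → A → ℝ) (p0 : S → ℝ) : S → ℝ :=
  fun s => (1 - γ) * ∑' t : ℕ, γ ^ t * stateDist P π p0 t s

/-- The normalized expected return `R^π_M`. -/
def expReturn {S A : Type} [Fintype S] [Fintype A]
    (γ : ℝ) (P : S → A → S → ℝ) (r : S → A → ℝ) (π : S → A → ℝ) (p0 : S → ℝ) : ℝ :=
  (1 - γ) * ∑' t : ℕ, γ ^ t * ∑ s, ∑ a, stateDist P π p0 t s * π s a * r s a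

/-- Transition kernel of the augmented MDP `M_μ` on `Option S`, where `none` plays the
role of the absorbing state `s_abs` and `dμ` is the discounted state distribution of
the behavior policy `μ`.  States `some s` with `dμ s = 0` are given no incoming mass,
so the reachable state space is exactly `S_μ ∪ {s_abs}`. -/
def augP {S A : Type} [Fintype S] [Fintype A]
    (P : S → A → S → ℝ) (dμ : S → ℝ) (μ : S → A → ℝ) : Option S → A → Option S → ℝ
  | none, _, none => 1
  | none, _, some _ => 0
  | some s, a, some s' => if 0 < dμ s * μ s a ∧ 0 < dμ s' then P s a s' else 0
  | some s, a, none =>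
      if 0 < dμ s * μ s a then ∑ s' ∈ Finset.univ.filter (fun s' => ¬ 0 < dμ s'), P s a s'
      else 1

/-- Reward function of the augmented MDP `M_μ`. -/
def augR {S A : Type} (r : S → A → ℝ) (dμ : S → ℝ) (μ : S → A → ℝ) : Option S → A → ℝ
  | none, _ => 0
  | some s, a => if 0 < dμ s * μ s a then r s a else 0

/-- Initial state distribution of the augmented MDP `M_μ`. -/
def augp0 {S : Type} (p0 : S → ℝ) : Option S → ℝ
  | none => 0
  | some s => p0 s

/-! Along the trajectories of `π*` every state-action pair that is ever visited is covered by
`μ`, so the augmented MDP evolves exactly like `M` there and `π*` collects the same reward in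
both. For an arbitrary policy of `M_μ`, the augmentation only diverts transitions to the
absorbing state and zeroes rewards, so the mass it puts on each original state is dominated by
that of its restriction to `S` run in `M`; its return is therefore at most the `M`-return of that
restriction, hence at most `R_M^{π*}`. -/

theorem mul_mul_eq_mul_mul_of_pos {α : Type*} [MulZeroClass α] [PartialOrder α] {u v x y : α}
    (hu : 0 ≤ u) (hv : 0 ≤ v) (h : 0 < u → 0 < v → x = y) : u * v * x = u * v * y := by
  rcases hu.eq_or_lt with rfl | hu
  · simp only [zero_mul]
  rcases hv.eq_or_lt with rfl | hv
  · simp only [mul_zero, zero_mul]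
  rw [h hu hv]

section

variable {S A : Type} [Fintype S] [Fintype A] {γ : ℝ} {P : S → A → S → ℝ} {r : S → A → ℝ}
  {π : S → A → ℝ} {p0 : S → ℝ}

def stepReward (P : S → A → S → ℝ) (r : S → A → ℝ) (π : S → A → ℝ) (p0 : S → ℝ) (t : ℕ) : ℝ :=
  ∑ s, ∑ a, stateDist P π p0 t s * π s a * r s a

theorem expReturn_eq_tsum_stepReward :
    expReturn γ P r π p0 = (1 - γ) * ∑' t : ℕ, γ ^ t * stepReward P r π p0 t := rfl

theorem stateDist_nonneg (hP0 : ∀ s a s', 0 ≤ P s a s') (hπ0 : ∀ s a, 0 ≤ π s a)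
    (hp00 : ∀ s, 0 ≤ p0 s) (t : ℕ) (s : S) : 0 ≤ stateDist P π p0 t s := by
  induction t generalizing s with
  | zero => exact hp00 s
  | succ t ih =>
    exact sum_nonneg fun u _ => sum_nonneg fun a _ =>
      mul_nonneg (mul_nonneg (ih u) (hπ0 u a)) (hP0 u a s)

theorem sum_stateDist (hP1 : ∀ s a, ∑ s', P s a s' = 1) (hπ1 : ∀ s, ∑ a, π s a = 1)
    (hp01 : ∑ s, p0 s = 1) (t : ℕ) : ∑ s, stateDist P π p0 t s = 1 := by
  induction t with
  | zero => exact hp01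
  | succ t ih =>
    set d := stateDist P π p0 t
    calc ∑ s', ∑ s, ∑ a, d s * π s a * P s a s'
        = ∑ s, ∑ a, d s * π s a * ∑ s', P s a s' := by
          simp_rw [mul_sum]; rw [sum_comm]; exact sum_congr rfl fun s _ => sum_comm
      _ = ∑ s, d s * ∑ a, π s a := by simp_rw [hP1, mul_one, mul_sum]
      _ = 1 := by simp_rw [hπ1, mul_one]; exact ih

theorem stateDist_le_one (hP0 : ∀ s a s', 0 ≤ P s a s') (hP1 : ∀ s a, ∑ s', P s a s' = 1)
    (hπ0 : ∀ s a, 0 ≤ π s a) (hπ1 : ∀ s, ∑ a, π s a = 1) (hp00 : ∀ s, 0 ≤ p0 s)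
    (hp01 : ∑ s, p0 s = 1) (t : ℕ) (s : S) : stateDist P π p0 t s ≤ 1 :=
  sum_stateDist hP1 hπ1 hp01 t ▸
    single_le_sum (fun s _ => stateDist_nonneg hP0 hπ0 hp00 t s) (mem_univ s)

theorem summable_discounted_stateDist (hγ0 : 0 ≤ γ) (hγ1 : γ < 1)
    (hP0 : ∀ s a s', 0 ≤ P s a s') (hP1 : ∀ s a, ∑ s', P s a s' = 1)
    (hπ0 : ∀ s a, 0 ≤ π s a) (hπ1 : ∀ s, ∑ a, π s a = 1) (hp00 : ∀ s, 0 ≤ p0 s)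
    (hp01 : ∑ s, p0 s = 1) (s : S) : Summable fun t => γ ^ t * stateDist P π p0 t s :=
  Summable.of_nonneg_of_le
    (fun t => mul_nonneg (pow_nonneg hγ0 t) (stateDist_nonneg hP0 hπ0 hp00 t s))
    (fun t => mul_le_of_le_one_right (pow_nonneg hγ0 t)
      (stateDist_le_one hP0 hP1 hπ0 hπ1 hp00 hp01 t s))
    (summable_geometric_of_lt_one hγ0 hγ1)

theorem summable_discounted_stepReward (hγ0 : 0 ≤ γ) (hγ1 : γ < 1)
    (hP0 : ∀ s a s', 0 ≤ P s a s') (hP1 : ∀ s a, ∑ s', P s a s' = 1)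
    (hπ0 : ∀ s a, 0 ≤ π s a) (hπ1 : ∀ s, ∑ a, π s a = 1) (hp00 : ∀ s, 0 ≤ p0 s)
    (hp01 : ∑ s, p0 s = 1) : Summable fun t => γ ^ t * stepReward P r π p0 t := by
  simp_rw [stepReward, mul_sum]
  refine summable_sum fun s _ => summable_sum fun a _ => ?_
  refine ((summable_discounted_stateDist hγ0 hγ1 hP0 hP1 hπ0 hπ1 hp00 hp01 s).mul_right
    (π s a * r s a)).congr fun t => ?_
  ring

theorem stepReward_nonneg (hP0 : ∀ s a s', 0 ≤ P s a s') (hr0 : ∀ s a, 0 ≤ r s a)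
    (hπ0 : ∀ s a, 0 ≤ π s a) (hp00 : ∀ s, 0 ≤ p0 s) (t : ℕ) : 0 ≤ stepReward P r π p0 t :=
  sum_nonneg fun s _ => sum_nonneg fun a _ =>
    mul_nonneg (mul_nonneg (stateDist_nonneg hP0 hπ0 hp00 t s) (hπ0 s a)) (hr0 s a)

theorem discDist_pos_of_stateDist_pos (hγ0 : 0 < γ) (hγ1 : γ < 1)
    (hP0 : ∀ s a s', 0 ≤ P s a s') (hP1 : ∀ s a, ∑ s', P s a s' = 1)
    (hπ0 : ∀ s a, 0 ≤ π s a) (hπ1 : ∀ s, ∑ a, π s a = 1) (hp00 : ∀ s, 0 ≤ p0 s)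
    (hp01 : ∑ s, p0 s = 1) {t : ℕ} {s : S} (h : 0 < stateDist P π p0 t s) :
    0 < discDist γ P π p0 s :=
  mul_pos (sub_pos.2 hγ1) <| (mul_pos (pow_pos hγ0 t) h).trans_le <|
    (summable_discounted_stateDist hγ0.le hγ1 hP0 hP1 hπ0 hπ1 hp00 hp01 s).le_tsum t
      fun n _ => mul_nonneg (pow_nonneg hγ0.le n) (stateDist_nonneg hP0 hπ0 hp00 n s)

end

section

variable {S A : Type} {r : S → A → ℝ} {dμ : S → ℝ} {μ : S → A → ℝ} {p0 : S → ℝ}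

theorem augR_nonneg (hr0 : ∀ s a, 0 ≤ r s a) (x : Option S) (a : A) :
    0 ≤ augR r dμ μ x a := by
  rcases x with _ | s <;> simp only [augR]
  · exact le_rfl
  · split_ifs
    exacts [hr0 s a, le_rfl]

theorem augR_some_le (hr0 : ∀ s a, 0 ≤ r s a) (s : S) (a : A) :
    augR r dμ μ (some s) a ≤ r s a := by
  simp only [augR]; split_ifs
  exacts [le_rfl, hr0 s a]

theorem augp0_nonneg (hp00 : ∀ s, 0 ≤ p0 s) (x : Option S) : 0 ≤ augp0 p0 x := by
  rcases x with _ | s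
  exacts [le_rfl, hp00 s]

end

section

variable {S A : Type} [Fintype S] [Fintype A] {γ : ℝ} {P : S → A → S → ℝ} {r : S → A → ℝ}
  {dμ : S → ℝ} {μ : S → A → ℝ} {π : S → A → ℝ} {πa : Option S → A → ℝ} {p0 : S → ℝ}

theorem augP_nonneg (hP0 : ∀ s a s', 0 ≤ P s a s') (x : Option S) (a : A) (x' : Option S) :
    0 ≤ augP P dμ μ x a x' := by
  rcases x with _ | s <;> rcases x' with _ | s' <;> simp only [augP]
  · exact zero_le_one
  · exact le_rfl
  · split_ifs
    exacts [sum_nonneg fun s' _ => hP0 s a s', zero_le_one]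
  · split_ifs
    exacts [hP0 s a s', le_rfl]

theorem augP_some_some_le (hP0 : ∀ s a s', 0 ≤ P s a s') (s : S) (a : A) (s' : S) :
    augP P dμ μ (some s) a (some s') ≤ P s a s' := by
  simp only [augP]; split_ifs
  exacts [le_rfl, hP0 s a s']

theorem stateDist_augP_succ_some (t : ℕ) (s' : S) :
    stateDist (augP P dμ μ) πa (augp0 p0) (t + 1) (some s') =
      ∑ s, ∑ a, stateDist (augP P dμ μ) πa (augp0 p0) t (some s) * πa (some s) a *
        augP P dμ μ (some s) a (some s') := by
  simp [stateDist, nextDist, Fintype.sum_option, augP]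

theorem stepReward_augP (t : ℕ) :
    stepReward (augP P dμ μ) (augR r dμ μ) πa (augp0 p0) t =
      ∑ s, ∑ a, stateDist (augP P dμ μ) πa (augp0 p0) t (some s) * πa (some s) a *
        augR r dμ μ (some s) a := by
  simp [stepReward, Fintype.sum_option, augR]

theorem stateDist_augP_some_le (hP0 : ∀ s a s', 0 ≤ P s a s') (hπa0 : ∀ x a, 0 ≤ πa x a)
    (hp00 : ∀ s, 0 ≤ p0 s) (t : ℕ) (s : S) :
    stateDist (augP P dμ μ) πa (augp0 p0) t (some s) ≤
      stateDist P (fun s a => πa (some s) a) p0 t s := by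
  induction t generalizing s with
  | zero => exact le_rfl
  | succ t ih =>
    rw [stateDist_augP_succ_some]
    refine sum_le_sum fun u _ => sum_le_sum fun a _ => ?_
    have hd := stateDist_nonneg hP0 (fun s a => hπa0 (some s) a) hp00 t u
    exact mul_le_mul (mul_le_mul_of_nonneg_right (ih u) (hπa0 _ a))
      (augP_some_some_le hP0 u a s) (augP_nonneg hP0 _ a _) (mul_nonneg hd (hπa0 _ a))

theorem stepReward_augP_le (hP0 : ∀ s a s', 0 ≤ P s a s') (hr0 : ∀ s a, 0 ≤ r s a)
    (hπa0 : ∀ x a, 0 ≤ πa x a) (hp00 : ∀ s, 0 ≤ p0 s) (t : ℕ) :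
    stepReward (augP P dμ μ) (augR r dμ μ) πa (augp0 p0) t ≤
      stepReward P r (fun s a => πa (some s) a) p0 t := by
  rw [stepReward_augP]
  refine sum_le_sum fun s _ => sum_le_sum fun a _ => ?_
  have hd := stateDist_nonneg hP0 (fun s a => hπa0 (some s) a) hp00 t s
  exact mul_le_mul (mul_le_mul_of_nonneg_right (stateDist_augP_some_le hP0 hπa0 hp00 t s)
    (hπa0 _ a)) (augR_some_le hr0 s a) (augR_nonneg hr0 _ a) (mul_nonneg hd (hπa0 _ a))

theorem expReturn_augP_le (hγ0 : 0 ≤ γ) (hγ1 : γ < 1)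
    (hP0 : ∀ s a s', 0 ≤ P s a s') (hP1 : ∀ s a, ∑ s', P s a s' = 1) (hr0 : ∀ s a, 0 ≤ r s a)
    (hπa0 : ∀ x a, 0 ≤ πa x a) (hπa1 : ∀ x, ∑ a, πa x a = 1) (hp00 : ∀ s, 0 ≤ p0 s)
    (hp01 : ∑ s, p0 s = 1) :
    expReturn γ (augP P dμ μ) (augR r dμ μ) πa (augp0 p0) ≤
      expReturn γ P r (fun s a => πa (some s) a) p0 := by
  rw [expReturn_eq_tsum_stepReward, expReturn_eq_tsum_stepReward]
  have hle : ∀ t, γ ^ t * stepReward (augP P dμ μ) (augR r dμ μ) πa (augp0 p0) t ≤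
      γ ^ t * stepReward P r (fun s a => πa (some s) a) p0 t := fun t =>
    mul_le_mul_of_nonneg_left (stepReward_augP_le hP0 hr0 hπa0 hp00 t) (pow_nonneg hγ0 t)
  have hsum := summable_discounted_stepReward (r := r) hγ0 hγ1 hP0 hP1
    (fun s a => hπa0 (some s) a) (fun s => hπa1 (some s)) hp00 hp01
  have hsum_aug : Summable fun t =>
      γ ^ t * stepReward (augP P dμ μ) (augR r dμ μ) πa (augp0 p0) t :=
    Summable.of_nonneg_of_le (fun t => mul_nonneg (pow_nonneg hγ0 t)
      (stepReward_nonneg (augP_nonneg hP0) (augR_nonneg hr0) hπa0 (augp0_nonneg hp00) t))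
      hle hsum
  exact mul_le_mul_of_nonneg_left (hsum_aug.tsum_le_tsum hle hsum) (sub_nonneg.2 hγ1.le)

def CoversVisited (dμ : S → ℝ) (μ : S → A → ℝ) (P : S → A → S → ℝ) (π : S → A → ℝ)
    (p0 : S → ℝ) : Prop :=
  ∀ t s, 0 < stateDist P π p0 t s → 0 < dμ s ∧ ∀ a, 0 < π s a → 0 < μ s a

theorem CoversVisited.mul_pos (hcov : CoversVisited dμ μ P π p0) {t : ℕ} {s : S} {a : A}
    (hs : 0 < stateDist P π p0 t s) (ha : 0 < π s a) : 0 < dμ s * μ s a :=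
  _root_.mul_pos (hcov t s hs).1 ((hcov t s hs).2 a ha)

theorem stateDist_augP_some_eq_of_covers (hP0 : ∀ s a s', 0 ≤ P s a s')
    (hπ0 : ∀ s a, 0 ≤ π s a) (hp00 : ∀ s, 0 ≤ p0 s) (hπ : ∀ s a, πa (some s) a = π s a)
    (hcov : CoversVisited dμ μ P π p0) (t : ℕ) (s : S) :
    stateDist (augP P dμ μ) πa (augp0 p0) t (some s) = stateDist P π p0 t s := by
  induction t generalizing s with
  | zero => rfl
  | succ t ih =>
    rw [stateDist_augP_succ_some]
    by_cases hs : 0 < dμ s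
    · refine sum_congr rfl fun u _ => sum_congr rfl fun a _ => ?_
      rw [ih, hπ]
      exact mul_mul_eq_mul_mul_of_pos (stateDist_nonneg hP0 hπ0 hp00 t u) (hπ0 u a)
        fun hu ha => if_pos ⟨hcov.mul_pos hu ha, hs⟩
    · have hzero : stateDist P π p0 (t + 1) s = 0 :=
        ((stateDist_nonneg hP0 hπ0 hp00 _ s).eq_of_not_lt fun h => hs (hcov _ s h).1).symm
      simp [hzero, augP, hs]

theorem stepReward_augP_eq_of_covers (hP0 : ∀ s a s', 0 ≤ P s a s')
    (hπ0 : ∀ s a, 0 ≤ π s a) (hp00 : ∀ s, 0 ≤ p0 s) (hπ : ∀ s a, πa (some s) a = π s a)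
    (hcov : CoversVisited dμ μ P π p0) (t : ℕ) :
    stepReward (augP P dμ μ) (augR r dμ μ) πa (augp0 p0) t = stepReward P r π p0 t := by
  rw [stepReward_augP]
  refine sum_congr rfl fun s _ => sum_congr rfl fun a _ => ?_
  rw [stateDist_augP_some_eq_of_covers hP0 hπ0 hp00 hπ hcov, hπ]
  exact mul_mul_eq_mul_mul_of_pos (stateDist_nonneg hP0 hπ0 hp00 t s) (hπ0 s a)
    fun hs ha => if_pos (hcov.mul_pos hs ha)

theorem expReturn_augP_eq_of_covers (hP0 : ∀ s a s', 0 ≤ P s a s')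
    (hπ0 : ∀ s a, 0 ≤ π s a) (hp00 : ∀ s, 0 ≤ p0 s) (hπ : ∀ s a, πa (some s) a = π s a)
    (hcov : CoversVisited dμ μ P π p0) :
    expReturn γ (augP P dμ μ) (augR r dμ μ) πa (augp0 p0) = expReturn γ P r π p0 := by
  simp only [expReturn_eq_tsum_stepReward, stepReward_augP_eq_of_covers hP0 hπ0 hp00 hπ hcov]

end

theorem augmented_optimal_policy_general {S A : Type} [Fintype S] [Fintype A]
    (γ : ℝ) (hγ0 : 0 < γ) (hγ1 : γ < 1)
    (P : S → A → S → ℝ) (hP0 : ∀ s a s', 0 ≤ P s a s') (hP1 : ∀ s a, ∑ s', P s a s' = 1)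
    (r : S → A → ℝ) (hr0 : ∀ s a, 0 ≤ r s a)
    (p0 : S → ℝ) (hp00 : ∀ s, 0 ≤ p0 s) (hp01 : ∑ s, p0 s = 1)
    (μ : S → A → ℝ)
    (πs : S → A → ℝ) (hπs0 : ∀ s a, 0 ≤ πs s a) (hπs1 : ∀ s, ∑ a, πs s a = 1)
    (hopt : ∀ π' : S → A → ℝ, (∀ s a, 0 ≤ π' s a) → (∀ s, ∑ a, π' s a = 1) →
      expReturn γ P r π' p0 ≤ expReturn γ P r πs p0)
    (hcovS : ∀ s, 0 < discDist γ P πs p0 s → 0 < discDist γ P μ p0 s)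
    (hcovA : ∀ s a, 0 < discDist γ P πs p0 s → 0 < πs s a → 0 < μ s a)
    (πsa : Option S → A → ℝ)
    (hagree : ∀ s a, πsa (some s) a = πs s a) :
    (∀ πa : Option S → A → ℝ, (∀ s a, 0 ≤ πa s a) → (∀ s, ∑ a, πa s a = 1) →
        expReturn γ (augP P (discDist γ P μ p0) μ) (augR r (discDist γ P μ p0) μ) πa (augp0 p0)
          ≤ expReturn γ (augP P (discDist γ P μ p0) μ) (augR r (discDist γ P μ p0) μ) πsa
              (augp0 p0)) ∧
      expReturn γ (augP P (discDist γ P μ p0) μ) (augR r (discDist γ P μ p0) μ) πsa (augp0 p0)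
        = expReturn γ P r πs p0 := by
  have hvisited {t s} : 0 < stateDist P πs p0 t s → 0 < discDist γ P πs p0 s :=
    discDist_pos_of_stateDist_pos hγ0 hγ1 hP0 hP1 hπs0 hπs1 hp00 hp01
  have hcov : CoversVisited (discDist γ P μ p0) μ P πs p0 := fun _ s h =>
    ⟨hcovS s (hvisited h), fun a => hcovA s a (hvisited h)⟩
  have heq := expReturn_augP_eq_of_covers (r := r) (γ := γ) hP0 hπs0 hp00 hagree hcov
  refine ⟨fun πa hπa0 hπa1 => ?_, heq⟩
  rw [heq]
  exact (expReturn_augP_le hγ0.le hγ1 hP0 hP1 hr0 hπa0 hπa1 hp00 hp01).trans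
    (hopt _ (fun s => hπa0 (some s)) fun s => hπa1 (some s))

/-- If `π*` is an optimal policy of `M` that is covered by the behavior
policy `μ`, then (any extension `πsa` of) `π*` is also optimal in the augmented MDP `M_μ`,
and the optimal values coincide: for every policy `πa` of `M_μ`,
`R_{M_μ}^{πa} ≤ R_{M_μ}^{π*} = R_M^{π*}`. -/
theorem augmented_optimal_policy {S A : Type} [Fintype S] [Fintype A]
    (γ : ℝ) (hγ0 : 0 < γ) (hγ1 : γ < 1)
    (P : S → A → S → ℝ) (hP0 : ∀ s a s', 0 ≤ P s a s') (hP1 : ∀ s a, ∑ s', P s a s' = 1)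
    (r : S → A → ℝ) (hr0 : ∀ s a, 0 ≤ r s a) (hr1 : ∀ s a, r s a ≤ 1)
    (p0 : S → ℝ) (hp00 : ∀ s, 0 ≤ p0 s) (hp01 : ∑ s, p0 s = 1)
    (μ : S → A → ℝ) (hμ0 : ∀ s a, 0 ≤ μ s a) (hμ1 : ∀ s, ∑ a, μ s a = 1)
    (πs : S → A → ℝ) (hπs0 : ∀ s a, 0 ≤ πs s a) (hπs1 : ∀ s, ∑ a, πs s a = 1)
    (hopt : ∀ π' : S → A → ℝ, (∀ s a, 0 ≤ π' s a) → (∀ s, ∑ a, π' s a = 1) →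
      expReturn γ P r π' p0 ≤ expReturn γ P r πs p0)
    (hcovS : ∀ s, 0 < discDist γ P πs p0 s → 0 < discDist γ P μ p0 s)
    (hcovA : ∀ s a, 0 < discDist γ P πs p0 s → 0 < πs s a → 0 < μ s a)
    (πsa : Option S → A → ℝ) (hπsa0 : ∀ s a, 0 ≤ πsa s a) (hπsa1 : ∀ s, ∑ a, πsa s a = 1)
    (hagree : ∀ s a, πsa (some s) a = πs s a) :
    (∀ πa : Option S → A → ℝ, (∀ s a, 0 ≤ πa s a) → (∀ s, ∑ a, πa s a = 1) →
        expReturn γ (augP P (discDist γ P μ p0) μ) (augR r (discDist γ P μ p0) μ) πa (augp0 p0)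
          ≤ expReturn γ (augP P (discDist γ P μ p0) μ) (augR r (discDist γ P μ p0) μ) πsa
              (augp0 p0)) ∧
      expReturn γ (augP P (discDist γ P μ p0) μ) (augR r (discDist γ P μ p0) μ) πsa (augp0 p0)
        = expReturn γ P r πs p0 :=
  augmented_optimal_policy_general γ hγ0 hγ1 P hP0 hP1 r hr0 p0 hp00 hp01 μ πs hπs0 hπs1 hopt hcovS
    hcovA πsa hagree
end
end

section
/- Let f : ℝ^d → ℝ (the expected return as a function of policy parameters) be differentiable with L-Lipschitz gradient (L > 0) and 0 ≤ f(x) ≤ V_max for all x. Let (Z, Σ, ν) be a probability space, and for each θ ∈ ℝ^d let w_θ, Q_θ : Z → ℝ and h_θ : Z → ℝ^d be measurable with ‖h_θ(z)‖ ≤ C ν-a.e., |Q_θ(z)| ≤ V_max ν-a.e., ∫ w_θ² dν ≤ σ_w², and the gradient identity ∇f(θ) = ∫ w_θ(z) Q_θ(z) h_θ(z) dν(z). Run gradient ascent Θ_{k+1} = Θ_k + (1/L) ζ_k for k = 1, …, K from a deterministic Θ_1, where ζ_k = ∫ ŵ_k(z) Q̂_k(z) h_{Θ_k}(z) dν(z)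 and ŵ_k, Q̂_k are random estimates, measurable with respect to the history through step k, satisfying almost surely ∫ (w_{Θ_k} − ŵ_k)² dν ≤ ε_{w,k}² and ∫ (Q_{Θ_k} − Q̂_k)² dν ≤ ε_{Q,k}². Then (1/K) Σ_{k=1}^K E[‖∇f(Θ_k)‖²] ≤ 2 L V_max / K + (4 C² / K) Σ_{k=1}^K ( ε_{w,k}² V_max² + ε_{Q,k}² (σ_w + ε_{w,k})² ). -/
/-!
Smoothness gives the ascent inequality `f (θ + ζ / L) ≥ f θ + (‖∇f θ‖² - ‖∇f θ - ζ‖²) / (2L)`, so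
along every trajectory `‖∇f(Θ_k)‖² ≤ 2L (f(Θ_{k+1}) - f(Θ_k)) + ‖∇f(Θ_k) - ζ_k‖²`, and the
increments of `f` telescope to at most `V_max`. The gradient error is controlled by Cauchy–Schwarz
in `L²(ν)` after writing `wQ - ŵQ̂ = (w - ŵ)Q + w(Q - Q̂) - (w - ŵ)(Q - Q̂)`, which gives
`‖∇f(Θ_k) - ζ_k‖ ≤ C (ε_w V_max + ε_Q (σ_w + ε_w))`. Since `‖∇f‖ ≤ C σ_w V_max` everywhere, all
the terms are integrable and the pathwise bound survives taking expectations.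
-/

open MeasureTheory

section L2

variable {Z : Type*} [MeasurableSpace Z] {ν : Measure Z}

theorem integral_abs_mul_le_of_integral_sq_le {u v : Z → ℝ} (hu : MemLp u 2 ν)
    (hv : MemLp v 2 ν) {a b : ℝ} (ha : 0 ≤ a) (hb : 0 ≤ b)
    (hua : ∫ z, u z ^ 2 ∂ν ≤ a ^ 2) (hvb : ∫ z, v z ^ 2 ∂ν ≤ b ^ 2) :
    ∫ z, |u z * v z| ∂ν ≤ a * b := by
  have holder := integral_mul_norm_le_Lp_mul_Lq Real.HolderConjugate.two_two
    (by simpa using hu) (by simpa using hv)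
  simp only [Real.norm_eq_abs, Real.rpow_two, sq_abs, ← Real.sqrt_eq_rpow, ← abs_mul] at holder
  calc ∫ z, |u z * v z| ∂ν ≤ √(∫ z, u z ^ 2 ∂ν) * √(∫ z, v z ^ 2 ∂ν) := holder
    _ ≤ √(a ^ 2) * √(b ^ 2) := by gcongr
    _ = a * b := by rw [Real.sqrt_sq ha, Real.sqrt_sq hb]

theorem integral_sq_le_of_abs_le [IsProbabilityMeasure ν] {Q : Z → ℝ} {V : ℝ}
    (hQ : ∀ᵐ z ∂ν, |Q z| ≤ V) : ∫ z, Q z ^ 2 ∂ν ≤ V ^ 2 := by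
  calc ∫ z, Q z ^ 2 ∂ν ≤ ∫ _, V ^ 2 ∂ν :=
        integral_mono_of_nonneg (.of_forall fun z => sq_nonneg _) (integrable_const _) <| by
          filter_upwards [hQ] with z hz
          exact sq_le_sq' (abs_le.1 hz).1 (abs_le.1 hz).2
    _ = V ^ 2 := by simp

theorem nonneg_of_ae_norm_le [NeZero ν] {E : Type*} [NormedAddCommGroup E] {h : Z → E} {C : ℝ}
    (hh : ∀ᵐ z ∂ν, ‖h z‖ ≤ C) : 0 ≤ C :=
  let ⟨_, hz⟩ := hh.exists
  (norm_nonneg _).trans hz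

variable {E : Type*} [NormedAddCommGroup E] [NormedSpace ℝ E]

theorem norm_integral_smul_le {g : Z → ℝ} {h : Z → E} {C : ℝ} (hg : Integrable g ν)
    (hh : ∀ᵐ z ∂ν, ‖h z‖ ≤ C) : ‖∫ z, g z • h z ∂ν‖ ≤ C * ∫ z, |g z| ∂ν := by
  rw [← integral_const_mul]
  refine norm_integral_le_of_norm_le (hg.abs.const_mul C) ?_
  filter_upwards [hh] with z hz
  rw [norm_smul, Real.norm_eq_abs, mul_comm]
  exact mul_le_mul_of_nonneg_right hz (abs_nonneg _)

theorem integral_abs_mul_sub_mul_le {V σ εw εQ : ℝ} {w Q w' Q' : Z → ℝ}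
    (hV : 0 ≤ V) (hσ : 0 ≤ σ) (hεw : 0 ≤ εw) (hεQ : 0 ≤ εQ)
    (hw : MemLp w 2 ν) (hQ : MemLp Q 2 ν) (hdw : MemLp (w - w') 2 ν) (hdQ : MemLp (Q - Q') 2 ν)
    (hwσ : ∫ z, w z ^ 2 ∂ν ≤ σ ^ 2) (hQV : ∫ z, Q z ^ 2 ∂ν ≤ V ^ 2)
    (hdwε : ∫ z, (w z - w' z) ^ 2 ∂ν ≤ εw ^ 2) (hdQε : ∫ z, (Q z - Q' z) ^ 2 ∂ν ≤ εQ ^ 2) :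
    ∫ z, |w z * Q z - w' z * Q' z| ∂ν ≤ εw * V + εQ * (σ + εw) := by
  have h1 : Integrable (fun z => |(w z - w' z) * Q z|) ν := (hdw.integrable_mul hQ).abs
  have h2 : Integrable (fun z => |w z * (Q z - Q' z)|) ν := (hw.integrable_mul hdQ).abs
  have h3 : Integrable (fun z => |(w z - w' z) * (Q z - Q' z)|) ν :=
    (hdw.integrable_mul hdQ).abs
  have h12 : Integrable (fun z => |(w z - w' z) * Q z| + |w z * (Q z - Q' z)|) ν := h1.add h2
  calc ∫ z, |w z * Q z - w' z * Q' z| ∂ν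
      ≤ ∫ z, (|(w z - w' z) * Q z| + |w z * (Q z - Q' z)| +
          |(w z - w' z) * (Q z - Q' z)|) ∂ν := by
        refine integral_mono_of_nonneg (.of_forall fun z => abs_nonneg _) (h12.add h3)
          (.of_forall fun z => ?_)
        dsimp only
        have : w z * Q z - w' z * Q' z =
            (w z - w' z) * Q z + w z * (Q z - Q' z) - (w z - w' z) * (Q z - Q' z) := by ring
        rw [this]
        exact (abs_sub _ _).trans (add_le_add_left (abs_add_le _ _) _)
    _ = ∫ z, |(w z - w' z) * Q z| ∂ν + ∫ z, |w z * (Q z - Q' z)| ∂ν +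
          ∫ z, |(w z - w' z) * (Q z - Q' z)| ∂ν := by
        rw [integral_add h12 h3, integral_add h1 h2]
    _ ≤ εw * V + σ * εQ + εw * εQ := by
        gcongr
        · exact integral_abs_mul_le_of_integral_sq_le hdw hQ hεw hV hdwε hQV
        · exact integral_abs_mul_le_of_integral_sq_le hw hdQ hσ hεQ hwσ hdQε
        · exact integral_abs_mul_le_of_integral_sq_le hdw hdQ hεw hεQ hdwε hdQε
    _ = εw * V + εQ * (σ + εw) := by ring

variable [IsProbabilityMeasure ν] {C V σ : ℝ} {w Q : Z → ℝ} {h : Z → E}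

theorem norm_integral_mul_smul_le (hV : 0 ≤ V) (hσ : 0 ≤ σ)
    (hw : MemLp w 2 ν) (hQ : AEStronglyMeasurable Q ν) (hQV : ∀ᵐ z ∂ν, |Q z| ≤ V)
    (hwσ : ∫ z, w z ^ 2 ∂ν ≤ σ ^ 2) (hh : ∀ᵐ z ∂ν, ‖h z‖ ≤ C) :
    ‖∫ z, (w z * Q z) • h z ∂ν‖ ≤ C * (σ * V) := by
  have hQ2 : MemLp Q 2 ν := .of_bound hQ V (by simpa only [Real.norm_eq_abs] using hQV)
  refine (norm_integral_smul_le (hw.integrable_mul hQ2) hh).trans ?_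
  have hC : 0 ≤ C := nonneg_of_ae_norm_le hh
  gcongr
  exact integral_abs_mul_le_of_integral_sq_le hw hQ2 hσ hV hwσ (integral_sq_le_of_abs_le hQV)

theorem sq_norm_integral_mul_smul_sub_le {εw εQ : ℝ} {w' Q' : Z → ℝ}
    (hV : 0 ≤ V) (hσ : 0 ≤ σ) (hεw : 0 ≤ εw) (hεQ : 0 ≤ εQ)
    (hw : MemLp w 2 ν) (hQ : AEStronglyMeasurable Q ν) (hQV : ∀ᵐ z ∂ν, |Q z| ≤ V)
    (hwσ : ∫ z, w z ^ 2 ∂ν ≤ σ ^ 2) (hhm : AEStronglyMeasurable h ν)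
    (hh : ∀ᵐ z ∂ν, ‖h z‖ ≤ C) (hdw : MemLp (w - w') 2 ν) (hdQ : MemLp (Q - Q') 2 ν)
    (hdwε : ∫ z, (w z - w' z) ^ 2 ∂ν ≤ εw ^ 2) (hdQε : ∫ z, (Q z - Q' z) ^ 2 ∂ν ≤ εQ ^ 2) :
    ‖∫ z, (w z * Q z) • h z ∂ν - ∫ z, (w' z * Q' z) • h z ∂ν‖ ^ 2 ≤
      2 * C ^ 2 * (εw ^ 2 * V ^ 2 + εQ ^ 2 * (σ + εw) ^ 2) := by
  have hQ2 : MemLp Q 2 ν := .of_bound hQ V (by simpa only [Real.norm_eq_abs] using hQV)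
  have hwQ : Integrable (fun z => w z * Q z) ν := hw.integrable_mul hQ2
  have hw' : MemLp w' 2 ν := by simpa using hw.sub hdw
  have hQ' : MemLp Q' 2 ν := by simpa using hQ2.sub hdQ
  have hwQ' : Integrable (fun z => w' z * Q' z) ν := hw'.integrable_mul hQ'
  have hwQh : Integrable (fun z => (w z * Q z) • h z) ν := hwQ.smul_bdd C hhm hh
  have hwQh' : Integrable (fun z => (w' z * Q' z) • h z) ν := hwQ'.smul_bdd C hhm hh
  rw [← integral_sub hwQh hwQh']
  simp only [← sub_smul]
  calc _ ≤ (C * (εw * V + εQ * (σ + εw))) ^ 2 := by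
        gcongr
        refine (norm_integral_smul_le (hwQ.sub hwQ') hh).trans ?_
        have hC : 0 ≤ C := nonneg_of_ae_norm_le hh
        gcongr
        exact integral_abs_mul_sub_mul_le hV hσ hεw hεQ hw hQ2 hdw hdQ hwσ
          (integral_sq_le_of_abs_le hQV) hdwε hdQε
    _ ≤ C ^ 2 * (2 * ((εw * V) ^ 2 + (εQ * (σ + εw)) ^ 2)) := by
        rw [mul_pow]; gcongr; exact add_sq_le
    _ = _ := by ring

end L2

theorem sum_integral_le_of_ae_sum_le {Ω ι : Type*} [MeasurableSpace Ω] {ℙ : Measure Ω}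
    [IsProbabilityMeasure ℙ] {s : Finset ι} {g : ι → Ω → ℝ} {B : ℝ}
    (hg : ∀ i ∈ s, Integrable (g i) ℙ) (hB : ∀ᵐ ω ∂ℙ, ∑ i ∈ s, g i ω ≤ B) :
    ∑ i ∈ s, ∫ ω, g i ω ∂ℙ ≤ B := by
  rw [← integral_finsetSum s hg]
  calc ∫ ω, ∑ i ∈ s, g i ω ∂ℙ ≤ ∫ _, B ∂ℙ :=
        integral_mono_ae (integrable_finsetSum s hg) (integrable_const B) hB
    _ = B := by simp

section GradientAscent

variable {F : Type*} [NormedAddCommGroup F] [InnerProductSpace ℝ F] [CompleteSpace F]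
  {f : F → ℝ} {L : ℝ}

theorem le_apply_add_of_norm_gradient_sub_le (hf : Differentiable ℝ f)
    (hlip : ∀ x y, ‖gradient f x - gradient f y‖ ≤ L * ‖x - y‖) (x v : F) :
    f x + inner ℝ (gradient f x) v - L / 2 * ‖v‖ ^ 2 ≤ f (x + v) := by
  have hderiv : ∀ t : ℝ, HasDerivAt (fun t : ℝ => f (x + t • v))
      (inner ℝ (gradient f (x + t • v)) v) t := fun t => by
    have hline : HasDerivAt (fun t : ℝ => x + t • v) v t := by
      simpa using ((hasDerivAt_id t).smul_const v).const_add x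
    simpa [Function.comp_def] using
      (hf (x + t • v)).hasGradientAt.hasFDerivAt.comp_hasDerivAt t hline
  -- `f` along the ray minus its quadratic lower model; the Lipschitz bound makes it monotone
  let φ : ℝ → ℝ := fun t =>
    f (x + t • v) - t * inner ℝ (gradient f x) v + L / 2 * ‖v‖ ^ 2 * t ^ 2
  have hφ : ∀ t, HasDerivAt φ (inner ℝ (gradient f (x + t • v)) v - inner ℝ (gradient f x) v
      + L * t * ‖v‖ ^ 2) t := fun t => by
    refine (((hderiv t).fun_sub (hasDerivAt_mul_const _)).fun_add
      ((hasDerivAt_pow 2 t).const_mul (L / 2 * ‖v‖ ^ 2))).congr_deriv ?_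
    push_cast
    ring
  have hmono : MonotoneOn φ (Set.Ici 0) := by
    refine monotoneOn_of_hasDerivWithinAt_nonneg (convex_Ici 0)
      (fun t _ => (hφ t).continuousAt.continuousWithinAt) (fun t _ => (hφ t).hasDerivWithinAt)
      fun t ht => ?_
    rw [interior_Ici] at ht
    have : inner ℝ (gradient f x - gradient f (x + t • v)) v ≤ L * t * ‖v‖ ^ 2 :=
      calc inner ℝ (gradient f x - gradient f (x + t • v)) v
          ≤ ‖gradient f x - gradient f (x + t • v)‖ * ‖v‖ := real_inner_le_norm _ _
        _ ≤ L * ‖x - (x + t • v)‖ * ‖v‖ := by gcongr; exact hlip _ _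
        _ = L * t * ‖v‖ ^ 2 := by
          rw [sub_add_cancel_left, norm_neg, norm_smul, Real.norm_of_nonneg (le_of_lt ht)]; ring
    rw [inner_sub_left] at this
    linarith
  have := hmono Set.self_mem_Ici (Set.mem_Ici.2 zero_le_one) zero_le_one
  simp only [φ, zero_smul, one_smul, add_zero, zero_mul, sub_zero, one_mul, one_pow, mul_one,
    ne_eq, OfNat.ofNat_ne_zero, not_false_eq_true, zero_pow] at this
  linarith

theorem sq_norm_gradient_le_of_step (hL : 0 < L) (hf : Differentiable ℝ f)
    (hlip : ∀ x y, ‖gradient f x - gradient f y‖ ≤ L * ‖x - y‖) (x ζ : F) :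
    ‖gradient f x‖ ^ 2 ≤ 2 * L * (f (x + (1 / L) • ζ) - f x) + ‖gradient f x - ζ‖ ^ 2 := by
  have hdesc := le_apply_add_of_norm_gradient_sub_le hf hlip x ((1 / L) • ζ)
  rw [real_inner_smul_right, norm_smul, Real.norm_of_nonneg (by positivity), mul_pow] at hdesc
  have hscaled : 2 * L * f x + 2 * inner ℝ (gradient f x) ζ - ‖ζ‖ ^ 2 ≤
      2 * L * f (x + (1 / L) • ζ) := by
    have := mul_le_mul_of_nonneg_left hdesc (by positivity : 0 ≤ 2 * L)
    field_simp at this ⊢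
    linarith
  rw [norm_sub_sq_real]
  linarith

theorem sum_sq_norm_gradient_le {V : ℝ} (hL : 0 < L) (hf : Differentiable ℝ f)
    (hlip : ∀ x y, ‖gradient f x - gradient f y‖ ≤ L * ‖x - y‖)
    (hf0 : ∀ x, 0 ≤ f x) (hfV : ∀ x, f x ≤ V) {θ ζ : ℕ → F} {m n : ℕ}
    (hθ : ∀ k ∈ Finset.Icc m n, θ (k + 1) = θ k + (1 / L) • ζ k) :
    ∑ k ∈ Finset.Icc m n, ‖gradient f (θ k)‖ ^ 2 ≤
      2 * L * V + ∑ k ∈ Finset.Icc m n, ‖gradient f (θ k) - ζ k‖ ^ 2 := by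
  have htelescope : ∑ k ∈ Finset.Icc m n, (f (θ (k + 1)) - f (θ k)) ≤ V := by
    rcases le_or_gt m n with hmn | hnm
    · rw [Finset.sum_Icc_sub hmn (fun k => f (θ k))]
      linarith [hfV (θ (n + 1)), hf0 (θ m)]
    · rw [Finset.Icc_eq_empty_of_lt hnm, Finset.sum_empty]
      exact (hf0 (θ m)).trans (hfV _)
  calc ∑ k ∈ Finset.Icc m n, ‖gradient f (θ k)‖ ^ 2
      ≤ ∑ k ∈ Finset.Icc m n,
          (2 * L * (f (θ (k + 1)) - f (θ k)) + ‖gradient f (θ k) - ζ k‖ ^ 2) :=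
        Finset.sum_le_sum fun k hk => by
          rw [hθ k hk]; exact sq_norm_gradient_le_of_step hL hf hlip _ _
    _ = 2 * L * ∑ k ∈ Finset.Icc m n, (f (θ (k + 1)) - f (θ k)) +
          ∑ k ∈ Finset.Icc m n, ‖gradient f (θ k) - ζ k‖ ^ 2 := by
        rw [Finset.sum_add_distrib, Finset.mul_sum]
    _ ≤ 2 * L * V + ∑ k ∈ Finset.Icc m n, ‖gradient f (θ k) - ζ k‖ ^ 2 := by
        gcongr

theorem sum_integral_sq_norm_gradient_le {Ω : Type*} [MeasurableSpace Ω] {ℙ : Measure Ω}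
    [IsProbabilityMeasure ℙ] [MeasurableSpace F] [OpensMeasurableSpace F] {V G : ℝ}
    (hL : 0 < L) (hf : Differentiable ℝ f)
    (hlip : ∀ x y, ‖gradient f x - gradient f y‖ ≤ L * ‖x - y‖)
    (hf0 : ∀ x, 0 ≤ f x) (hfV : ∀ x, f x ≤ V) (hG : ∀ x, ‖gradient f x‖ ≤ G)
    {Θ ζ : ℕ → Ω → F} {e : ℕ → ℝ} {m n : ℕ} (hΘ : ∀ k, Measurable (Θ k))
    (hstep : ∀ k ∈ Finset.Icc m n, ∀ ω, Θ (k + 1) ω = Θ k ω + (1 / L) • ζ k ω)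
    (herr : ∀ k ∈ Finset.Icc m n, ∀ᵐ ω ∂ℙ, ‖gradient f (Θ k ω) - ζ k ω‖ ^ 2 ≤ e k) :
    ∑ k ∈ Finset.Icc m n, ∫ ω, ‖gradient f (Θ k ω)‖ ^ 2 ∂ℙ ≤
      2 * L * V + ∑ k ∈ Finset.Icc m n, e k := by
  have hgradient : Continuous (gradient f) :=
    (LipschitzWith.of_dist_le_mul (K := L.toNNReal) fun x y => by
      simpa only [dist_eq_norm, Real.coe_toNNReal _ hL.le] using hlip x y).continuous
  refine sum_integral_le_of_ae_sum_le (fun k _ => .of_bound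
    ((hgradient.norm.pow 2).measurable.comp (hΘ k)).aestronglyMeasurable (G ^ 2)
    (.of_forall fun ω => ?_)) ?_
  · rw [Real.norm_of_nonneg (by positivity)]
    gcongr
    exact hG _
  · filter_upwards [(Filter.eventually_all_finset _).2 herr] with ω hω
    calc _ ≤ 2 * L * V + ∑ k ∈ Finset.Icc m n, ‖gradient f (Θ k ω) - ζ k ω‖ ^ 2 :=
          sum_sq_norm_gradient_le hL hf hlip hf0 hfV fun k hk => hstep k hk ω
      _ ≤ 2 * L * V + ∑ k ∈ Finset.Icc m n, e k := by gcongr with k hk; exact hω k hk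

end GradientAscent

theorem opposd_convergence_general {d : ℕ} {Ω Z : Type} [MeasurableSpace Ω] [MeasurableSpace Z]
    (ℙ : Measure Ω) [IsProbabilityMeasure ℙ] (ν : Measure Z) [IsProbabilityMeasure ν]
    (f : EuclideanSpace ℝ (Fin d) → ℝ) (L Vmax C σw : ℝ)
    (hL : 0 < L) (hσw : 0 ≤ σw)
    (hf : Differentiable ℝ f)
    (hlip : ∀ x y, ‖gradient f x - gradient f y‖ ≤ L * ‖x - y‖)
    (hf0 : ∀ x, 0 ≤ f x) (hfV : ∀ x, f x ≤ Vmax)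
    (w Q : EuclideanSpace ℝ (Fin d) → Z → ℝ)
    (h : EuclideanSpace ℝ (Fin d) → Z → EuclideanSpace ℝ (Fin d))
    (hwm : ∀ θ, Measurable (w θ)) (hQm : ∀ θ, Measurable (Q θ))
    (hhm : ∀ θ, AEStronglyMeasurable (h θ) ν)
    (hhC : ∀ θ, ∀ᵐ z ∂ν, ‖h θ z‖ ≤ C)
    (hQb : ∀ θ, ∀ᵐ z ∂ν, |Q θ z| ≤ Vmax)
    (hw2int : ∀ θ, Integrable (fun z => w θ z ^ 2) ν)
    (hw2 : ∀ θ, ∫ z, w θ z ^ 2 ∂ν ≤ σw ^ 2)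
    (hgrad : ∀ θ, gradient f θ = ∫ z, (w θ z * Q θ z) • h θ z ∂ν)
    (K : ℕ)
    (Θ : ℕ → Ω → EuclideanSpace ℝ (Fin d))
    (wh Qh : ℕ → Ω → Z → ℝ)
    (hΘmeas : ∀ k, Measurable (Θ k))
    (hwhm : ∀ k, Measurable (Function.uncurry (wh k)))
    (hQhm : ∀ k, Measurable (Function.uncurry (Qh k)))
    (hrec : ∀ k, 1 ≤ k → k ≤ K → Θ (k + 1) =
      fun ω => Θ k ω + (1 / L) • ∫ z, (wh k ω z * Qh k ω z) • h (Θ k ω) z ∂ν)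
    (εw εQ : ℕ → ℝ) (hεw : ∀ k, 0 ≤ εw k) (hεQ : ∀ k, 0 ≤ εQ k)
    (hwherr : ∀ k, 1 ≤ k → k ≤ K → ∀ᵐ ω ∂ℙ,
      Integrable (fun z => (w (Θ k ω) z - wh k ω z) ^ 2) ν ∧
        ∫ z, (w (Θ k ω) z - wh k ω z) ^ 2 ∂ν ≤ εw k ^ 2)
    (hQherr : ∀ k, 1 ≤ k → k ≤ K → ∀ᵐ ω ∂ℙ,
      Integrable (fun z => (Q (Θ k ω) z - Qh k ω z) ^ 2) ν ∧
        ∫ z, (Q (Θ k ω) z - Qh k ω z) ^ 2 ∂ν ≤ εQ k ^ 2) :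
    (1 / (K : ℝ)) * ∑ k ∈ Finset.Icc 1 K, ∫ ω, ‖gradient f (Θ k ω)‖ ^ 2 ∂ℙ ≤
      2 * L * Vmax / (K : ℝ) +
        (4 * C ^ 2 / (K : ℝ)) *
          ∑ k ∈ Finset.Icc 1 K, (εw k ^ 2 * Vmax ^ 2 + εQ k ^ 2 * (σw + εw k) ^ 2) := by
  have hV : 0 ≤ Vmax := (hf0 0).trans (hfV 0)
  have hL2 : ∀ {u : Z → ℝ}, Measurable u → Integrable (fun z => u z ^ 2) ν → MemLp u 2 ν :=
    fun hu hu2 => (memLp_two_iff_integrable_sq hu.aestronglyMeasurable).2 hu2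
  have herr : ∀ k ∈ Finset.Icc 1 K, ∀ᵐ ω ∂ℙ,
      ‖gradient f (Θ k ω) - ∫ z, (wh k ω z * Qh k ω z) • h (Θ k ω) z ∂ν‖ ^ 2 ≤
        2 * C ^ 2 * (εw k ^ 2 * Vmax ^ 2 + εQ k ^ 2 * (σw + εw k) ^ 2) := by
    intro k hk
    obtain ⟨hk1, hkK⟩ := Finset.mem_Icc.1 hk
    filter_upwards [hwherr k hk1 hkK, hQherr k hk1 hkK] with ω ⟨hdw, hdwε⟩ ⟨hdQ, hdQε⟩
    rw [hgrad]
    exact sq_norm_integral_mul_smul_sub_le hV hσw (hεw k) (hεQ k) (hL2 (hwm _) (hw2int _))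
      (hQm _).aestronglyMeasurable (hQb _) (hw2 _) (hhm _) (hhC _)
      (hL2 ((hwm _).sub (hwhm k).of_uncurry_left) hdw)
      (hL2 ((hQm _).sub (hQhm k).of_uncurry_left) hdQ) hdwε hdQε
  have hsum := sum_integral_sq_norm_gradient_le (ζ := fun k ω =>
      ∫ z, (wh k ω z * Qh k ω z) • h (Θ k ω) z ∂ν) hL hf hlip hf0 hfV
    (fun θ => hgrad θ ▸ norm_integral_mul_smul_le hV hσw (hL2 (hwm θ) (hw2int θ))
      (hQm θ).aestronglyMeasurable (hQb θ) (hw2 θ) (hhC θ))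
    hΘmeas (fun k hk => congrFun (hrec k (Finset.mem_Icc.1 hk).1 (Finset.mem_Icc.1 hk).2)) herr
  rw [← Finset.mul_sum] at hsum
  set T := ∑ k ∈ Finset.Icc 1 K, (εw k ^ 2 * Vmax ^ 2 + εQ k ^ 2 * (σw + εw k) ^ 2)
  have hT : 0 ≤ T := Finset.sum_nonneg fun k _ => by positivity
  calc _ ≤ (1 / (K : ℝ)) * (2 * L * Vmax + 4 * C ^ 2 * T) := by
        gcongr
        exact hsum.trans (by gcongr; norm_num)
    _ = _ := by ring

/-- Convergence of OPPOSD (Theorem 3 of the paper): gradient ascent with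
step size `1/L` on an `L`-smooth expected return `f` with `0 ≤ f ≤ V_max`, driven by plug-in
off-policy gradient estimates
`ζ k = ∫ ŵ_k Q̂_k h_{Θ_k} dν` of the true gradient `∇f(θ) = ∫ w_θ Q_θ h_θ dν`, where the
estimated ratio and critic have root-mean-squared errors at most `ε_w k` and `ε_Q k`,
satisfies
`(1/K) Σ_{k=1}^K E‖∇f(Θ_k)‖² ≤ 2 L V_max / K + (4C²/K) Σ_{k=1}^K (ε_w k² V_max² + ε_Q k² (σ_w + ε_w k)²)`. -/
theorem opposd_convergence {d : ℕ} {Ω Z : Type} [MeasurableSpace Ω] [MeasurableSpace Z]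
    (ℙ : Measure Ω) [IsProbabilityMeasure ℙ] (ν : Measure Z) [IsProbabilityMeasure ν]
    (f : EuclideanSpace ℝ (Fin d) → ℝ) (L Vmax C σw : ℝ)
    (hL : 0 < L) (hC : 0 ≤ C) (hσw : 0 ≤ σw)
    (hf : Differentiable ℝ f)
    (hlip : ∀ x y, ‖gradient f x - gradient f y‖ ≤ L * ‖x - y‖)
    (hf0 : ∀ x, 0 ≤ f x) (hfV : ∀ x, f x ≤ Vmax)
    (w Q : EuclideanSpace ℝ (Fin d) → Z → ℝ)
    (h : EuclideanSpace ℝ (Fin d) → Z → EuclideanSpace ℝ (Fin d))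
    (hwm : ∀ θ, Measurable (w θ)) (hQm : ∀ θ, Measurable (Q θ))
    (hhm : ∀ θ, AEStronglyMeasurable (h θ) ν)
    (hhC : ∀ θ, ∀ᵐ z ∂ν, ‖h θ z‖ ≤ C)
    (hQb : ∀ θ, ∀ᵐ z ∂ν, |Q θ z| ≤ Vmax)
    (hw2int : ∀ θ, Integrable (fun z => w θ z ^ 2) ν)
    (hw2 : ∀ θ, ∫ z, w θ z ^ 2 ∂ν ≤ σw ^ 2)
    (hgrad : ∀ θ, gradient f θ = ∫ z, (w θ z * Q θ z) • h θ z ∂ν)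
    (K : ℕ) (θ1 : EuclideanSpace ℝ (Fin d))
    (Θ : ℕ → Ω → EuclideanSpace ℝ (Fin d)) (hΘ1 : Θ 1 = fun _ => θ1)
    (wh Qh : ℕ → Ω → Z → ℝ)
    (hΘmeas : ∀ k, Measurable (Θ k))
    (hwhm : ∀ k, Measurable (Function.uncurry (wh k)))
    (hQhm : ∀ k, Measurable (Function.uncurry (Qh k)))
    (hrec : ∀ k, 1 ≤ k → k ≤ K → Θ (k + 1) =
      fun ω => Θ k ω + (1 / L) • ∫ z, (wh k ω z * Qh k ω z) • h (Θ k ω) z ∂ν)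
    (εw εQ : ℕ → ℝ) (hεw : ∀ k, 0 ≤ εw k) (hεQ : ∀ k, 0 ≤ εQ k)
    (hwherr : ∀ k, 1 ≤ k → k ≤ K → ∀ᵐ ω ∂ℙ,
      Integrable (fun z => (w (Θ k ω) z - wh k ω z) ^ 2) ν ∧
        ∫ z, (w (Θ k ω) z - wh k ω z) ^ 2 ∂ν ≤ εw k ^ 2)
    (hQherr : ∀ k, 1 ≤ k → k ≤ K → ∀ᵐ ω ∂ℙ,
      Integrable (fun z => (Q (Θ k ω) z - Qh k ω z) ^ 2) ν ∧
        ∫ z, (Q (Θ k ω) z - Qh k ω z) ^ 2 ∂ν ≤ εQ k ^ 2) :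
    (1 / (K : ℝ)) * ∑ k ∈ Finset.Icc 1 K, ∫ ω, ‖gradient f (Θ k ω)‖ ^ 2 ∂ℙ ≤
      2 * L * Vmax / (K : ℝ) +
        (4 * C ^ 2 / (K : ℝ)) *
          ∑ k ∈ Finset.Icc 1 K, (εw k ^ 2 * Vmax ^ 2 + εQ k ^ 2 * (σw + εw k) ^ 2) :=
  opposd_convergence_general ℙ ν f L Vmax C σw hL hσw hf hlip hf0 hfV w Q h hwm hQm hhm hhC hQb
    hw2int hw2 hgrad K Θ wh Qh hΘmeas hwhm hQhm hrec εw εQ hεw hεQ hwherr hQherr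
end
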